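/- (Cassini's identity for bicomplex Pell–Lucas numbers) For every integer n, BPL(n−1)·BPL(n+1) − BPL(n)² = 96·(−1)^{n+1}·(j + ij). -/

import Mathlib

open scoped TensorProduct

noncomputable def bi : ℂ ⊗[ℝ] ℂ := Complex.I ⊗ₜ[ℝ] 1
noncomputable def bj : ℂ ⊗[ℝ] ℂ := (1 : ℂ) ⊗ₜ[ℝ] Complex.I
noncomputable def bij : ℂ ⊗[ℝ] ℂ := Complex.I ⊗ₜ[ℝ] Complex.I

/-- The bicomplex Pell-Lucas number `BPL n = Q n + Q (n+1) i + Q (n+2) j + Q (n+3) ij`. -/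
noncomputable def BPL (Q : ℤ → ℤ) (n : ℤ) : ℂ ⊗[ℝ] ℂ :=
  (Q n : ℝ) • (1 : ℂ ⊗[ℝ] ℂ) + (Q (n + 1) : ℝ) • bi + (Q (n + 2) : ℝ) • bj +
    (Q (n + 3) : ℝ) • bij

/-!
`BPL Q` is itself a sequence in the commutative ring `ℂ ⊗[ℝ] ℂ` satisfying the Pell recurrence,
since the recurrence is linear. For any such sequence the Cassini defect
`X (n - 1) * X (n + 1) - X n ^ 2` changes sign at each step, so it equals `(-1) ^ n` times its
value at `n = 0`; for `BPL` that value is `-96 (j + ij)`, a finite computation with `i² = j² = -1`.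
-/

theorem eq_neg_one_zpow_smul_of_forall_succ_eq_neg {K M : Type*} [DivisionRing K]
    [AddCommGroup M] [Module K M] {f : ℤ → M} (hf : ∀ n, f (n + 1) = -f n) (n : ℤ) :
    f n = (-1 : K) ^ n • f 0 := by
  have hK : (-1 : K) ≠ 0 := neg_ne_zero.2 one_ne_zero
  induction n using Int.induction_on with
  | zero => simp
  | succ i ih => rw [hf, ih, zpow_add_one₀ hK, mul_neg_one, neg_smul]
  | pred i ih =>
    have h := hf (-i - 1)
    rw [sub_add_cancel] at h
    rw [zpow_sub_one₀ hK, inv_neg_one, mul_neg_one, neg_smul, ← ih, h, neg_neg]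

theorem cassini_of_recurrence {K R : Type*} [DivisionRing K] [CommRing R] [Module K R]
    {X : ℤ → R} {a : R} (hX : ∀ n, X (n + 2) = a * X (n + 1) + X n) (n : ℤ) :
    X (n - 1) * X (n + 1) - X n ^ 2 = (-1 : K) ^ n • (X (-1) * X 1 - X 0 ^ 2) := by
  refine eq_neg_one_zpow_smul_of_forall_succ_eq_neg
    (f := fun m => X (m - 1) * X (m + 1) - X m ^ 2) (fun m => ?_) n
  have h₀ := hX (m - 1)
  have h₁ := hX m
  rw [show m - 1 + 2 = m + 1 by ring, sub_add_cancel] at h₀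
  rw [add_sub_cancel_right, add_assoc, one_add_one_eq_two]
  linear_combination X m * h₁ - X (m + 1) * h₀

lemma bi_mul_bi : bi * bi = -1 := by
  rw [bi, Algebra.TensorProduct.tmul_mul_tmul, Complex.I_mul_I, one_mul, TensorProduct.neg_tmul]
  rfl

lemma bj_mul_bj : bj * bj = -1 := by
  rw [bj, Algebra.TensorProduct.tmul_mul_tmul, Complex.I_mul_I, one_mul, TensorProduct.tmul_neg]
  rfl

lemma bi_mul_bj : bi * bj = bij := by
  rw [bi, bj, bij, Algebra.TensorProduct.tmul_mul_tmul, one_mul, mul_one]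

/-- The `ℝ`-action in `BPL` is the tensor product's module structure, which `Algebra.smul_def`
only matches up to instance unfolding. -/
lemma real_smul_eq_algebraMap_mul (r : ℝ) (x : ℂ ⊗[ℝ] ℂ) : r • x = algebraMap ℝ _ r * x :=
  Algebra.smul_def r x

lemma BPL_add_two {Q : ℤ → ℤ} (hQ : ∀ n : ℤ, Q (n + 2) = 2 * Q (n + 1) + Q n) (n : ℤ) :
    BPL Q (n + 2) = 2 * BPL Q (n + 1) + BPL Q n := by
  have e (k : ℤ) : (Q (n + (k + 2)) : ℝ) = 2 * Q (n + (k + 1)) + Q (n + k) := by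
    simp only [← add_assoc]
    exact_mod_cast hQ (n + k)
  have e0 := e 0
  have e1 := e 1
  have e2 := e 2
  have e3 := e 3
  simp only [zero_add, add_zero, Int.reduceAdd] at e0 e1 e2 e3
  simp only [BPL, add_assoc, Int.reduceAdd, two_mul]
  simp only [e0, e1, e2, e3]
  module

lemma BPL_cassini_at_zero {Q : ℤ → ℤ} (hQ : ∀ n : ℤ, Q (n + 2) = 2 * Q (n + 1) + Q n)
    (hQ0 : Q 0 = 2) (hQ1 : Q 1 = 2) :
    BPL Q (-1) * BPL Q 1 - BPL Q 0 ^ 2 = (-96 : ℝ) • (bj + bij) := by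
  have hm1 : Q (-1) = -2 := by have := hQ (-1); norm_num at this; omega
  have h2 : Q 2 = 6 := by have := hQ 0; norm_num at this; omega
  have h3 : Q 3 = 14 := by have := hQ 1; norm_num at this; omega
  have h4 : Q 4 = 34 := by have := hQ 2; norm_num at this; omega
  simp only [BPL, Int.reduceAdd, Int.reduceNeg, hm1, hQ0, hQ1, h2, h3, h4, ← bi_mul_bj,
    Int.cast_ofNat, Int.cast_neg, real_smul_eq_algebraMap_mul, map_neg, map_ofNat, mul_one]
  grind [bi_mul_bi, bj_mul_bj]

theorem bicomplexPellLucas_cassini (Q : ℤ → ℤ)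
    (hQ : ∀ n : ℤ, Q (n + 2) = 2 * Q (n + 1) + Q n) (hQ0 : Q 0 = 2) (hQ1 : Q 1 = 2)
    (n : ℤ) :
    BPL Q (n - 1) * BPL Q (n + 1) - BPL Q n ^ 2 =
      (96 * (-1 : ℝ) ^ (n + 1)) • (bj + bij) := by
  rw [cassini_of_recurrence (K := ℝ) (BPL_add_two hQ), BPL_cassini_at_zero hQ hQ0 hQ1, smul_smul,
    zpow_add_one₀ (neg_ne_zero.2 one_ne_zero)]
  congr 1
  ring
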